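/- Let σ be a duplicate-free sequence over V and let Z be a set of t ≥ 1 elements of σ. Then f(σ) − f(σ−Z) ≤ t·( d_in·M_in + d_out·M_out ) ≤ t·(d_in + d_out)·max{M_in, M_out}, where M_in = max{ h({(u,z)}) : (u,z) ∈ E, z ∈ Z } and M_out = max{ h({(z,u)}) : (z,u) ∈ E, z ∈ Z } (each taken to be 0 if the corresponding set of edges is empty). -/

import Mathlib

open Finset

namespace RoseNets

variable {V : Type*} [Fintype V] [DecidableEq V]

/-- The edge set induced by a sequence `σ`: all edges `(u,v) ∈ E` with `u` occurring
strictly before `v` in `σ`, together with all self-loops `(v,v) ∈ E` with `v ∈ σ`. -/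
def inducedEdges (E : Finset (V × V)) (σ : List V) : Finset (V × V) :=
  E.filter fun e =>
    (∃ i j : Fin σ.length, i < j ∧ σ.get i = e.1 ∧ σ.get j = e.2) ∨
      (e.1 = e.2 ∧ e.1 ∈ σ)

/-- The networked submodular objective `f(σ) = h(E(σ))`. -/
def fval (E : Finset (V × V)) (h : Finset (V × V) → ℝ) (σ : List V) : ℝ :=
  h (inducedEdges E σ)

/-- Maximum in-degree of the graph. -/
def dIn (E : Finset (V × V)) : ℕ :=
  Finset.univ.sup fun v => (E.filter fun e => e.2 = v).card

/-- Maximum out-degree of the graph. -/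
def dOut (E : Finset (V × V)) : ℕ :=
  Finset.univ.sup fun v => (E.filter fun e => e.1 = v).card

/-- The robust objective `g_τ(σ) = min_{Z ⊆ V, |Z| ≤ τ} f(σ − Z)`. -/
noncomputable def gRob (E : Finset (V × V)) (h : Finset (V × V) → ℝ) (τ : ℕ)
    (σ : List V) : ℝ :=
  ((Finset.univ : Finset V).powerset.filter fun Z => Z.card ≤ τ).inf'
    ⟨∅, by simp⟩ fun Z => fval E h (σ.filter fun v => v ∉ Z)

/-- Marginal gain of an edge with respect to an edge set: `h(e|S) = h(S ∪ {e}) − h(S)`. -/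
def marg (h : Finset (V × V) → ℝ) (S : Finset (V × V)) (e : V × V) : ℝ :=
  h (insert e S) - h S

/-- Candidate edges for a Sequence Greedy step over ground set `U`. -/
def candidates (E : Finset (V × V)) (U : Finset V) (σ : List V) : Finset (V × V) :=
  E.filter fun e => e.1 ∈ U ∧ e.2 ∈ U ∧ e.2 ∉ σ

/-- Candidate edges when only one slot remains: the tail must already be selected,
or the edge is a self-loop. -/
def lastCandidates (E : Finset (V × V)) (U : Finset V) (σ : List V) : Finset (V × V) :=
  (candidates E U σ).filter fun e => e.1 = e.2 ∨ e.1 ∈ σ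

/-- One step of Sequence Greedy with budget `m` over ground set `U`. -/
inductive GreedyStep (E : Finset (V × V)) (h : Finset (V × V) → ℝ) (U : Finset V) (m : ℕ) :
    List V → List V → Prop
  | normal (σ : List V) (e : V × V) (hlen : σ.length + 1 < m)
      (hmem : e ∈ candidates E U σ)
      (hmax : ∀ e' ∈ candidates E U σ,
        marg h (inducedEdges E σ) e' ≤ marg h (inducedEdges E σ) e) :
      GreedyStep E h U m σ
        (if e.1 = e.2 ∨ e.1 ∈ σ then σ ++ [e.2] else σ ++ [e.1, e.2])
  | last (σ : List V) (e : V × V) (hlen : σ.length + 1 = m)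
      (hmem : e ∈ lastCandidates E U σ)
      (hmax : ∀ e' ∈ lastCandidates E U σ,
        marg h (inducedEdges E σ) e' ≤ marg h (inducedEdges E σ) e) :
      GreedyStep E h U m σ (σ ++ [e.2])

/-- `σ` is a possible output of Sequence Greedy with budget `m` over ground set `U`. -/
def IsGreedyOutput (E : Finset (V × V)) (h : Finset (V × V) → ℝ) (U : Finset V) (m : ℕ)
    (σ : List V) : Prop :=
  Relation.ReflTransGen (GreedyStep E h U m) [] σ ∧ σ.length = m

/-- `σ` is a possible output of the RoseNets algorithm with parameters `(k, τ)`. -/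
def IsRoseNetsOutput (E : Finset (V × V)) (h : Finset (V × V) → ℝ) (k τ : ℕ)
    (σ : List V) : Prop :=
  ∃ σ1 σ2 : List V,
    IsGreedyOutput E h Finset.univ τ σ1 ∧
    IsGreedyOutput E h (Finset.univ \ σ1.toFinset) (k - τ) σ2 ∧
    σ = σ1 ++ σ2


/-- Largest single-edge utility among edges entering the set `Z` (0 if there are none). -/
noncomputable def maxInUtilitySet (E : Finset (V × V)) (h : Finset (V × V) → ℝ)
    (Z : Finset V) : ℝ :=
  if hne : (E.filter fun e => e.2 ∈ Z).Nonempty then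
    (E.filter fun e => e.2 ∈ Z).sup' hne fun e => h {e}
  else 0

/-- Largest single-edge utility among edges leaving the set `Z` (0 if there are none). -/
noncomputable def maxOutUtilitySet (E : Finset (V × V)) (h : Finset (V × V) → ℝ)
    (Z : Finset V) : ℝ :=
  if hne : (E.filter fun e => e.1 ∈ Z).Nonempty then
    (E.filter fun e => e.1 ∈ Z).sup' hne fun e => h {e}
  else 0
/-!
An edge induced by `σ` but not by `σ − Z` has its head or its tail in `Z`; there are at most
`t·d_in` edges of the first kind, each of utility at most `M_in`, and at most `t·d_out` of the
second, each of utility at most `M_out`. Submodularity with `h ∅ = 0` makes `h` subadditive on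
top of any edge set, so the loss `h(E(σ)) − h(E(σ − Z))` is at most the total singleton utility
of these edges.
-/

section SupOrZero

variable {α : Type*}

-- `maxInUtilitySet E h Z` and `maxOutUtilitySet E h Z` unfold to `supOrZero` of the edges
-- entering, resp. leaving, `Z`.
noncomputable def supOrZero (S : Finset α) (g : α → ℝ) : ℝ :=
  if hne : S.Nonempty then S.sup' hne g else 0

variable {S : Finset α} {g : α → ℝ}

theorem le_supOrZero {x : α} (hx : x ∈ S) : g x ≤ supOrZero S g := by
  rw [supOrZero, dif_pos ⟨x, hx⟩]
  exact S.le_sup' g hx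

theorem supOrZero_nonneg (hg : ∀ x ∈ S, 0 ≤ g x) : 0 ≤ supOrZero S g := by
  unfold supOrZero
  split_ifs with hne
  · obtain ⟨x, hx⟩ := hne
    exact (hg x hx).trans (S.le_sup' g hx)
  · exact le_rfl

theorem sum_le_card_mul_supOrZero : ∑ x ∈ S, g x ≤ #S * supOrZero S g := by
  rw [← nsmul_eq_mul]
  exact S.sum_le_card_nsmul g _ fun _ hx => le_supOrZero hx

end SupOrZero

theorem card_filter_mem_le_card_mul {α β : Type*} [DecidableEq β] (s : Finset α) (p : α → β)
    (Z : Finset β) {d : ℕ} (hd : ∀ z, #{x ∈ s | p x = z} ≤ d) :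
    #{x ∈ s | p x ∈ Z} ≤ #Z * d := by
  rw [mul_comm]
  refine card_le_mul_card_image_of_maps_to (fun x hx => (mem_filter.1 hx).2) d fun z _ => ?_
  exact (card_le_card (filter_subset_filter _ (filter_subset _ s))).trans (hd z)

theorem sum_filter_mem_le {α β : Type*} [DecidableEq β] (s : Finset α) (p : α → β)
    (Z : Finset β) {d : ℕ} (hd : ∀ z, #{x ∈ s | p x = z} ≤ d) {g : α → ℝ}
    (hg : ∀ x ∈ s, 0 ≤ g x) :
    ∑ x ∈ s with p x ∈ Z, g x ≤ #Z * d * supOrZero {x ∈ s | p x ∈ Z} g := by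
  have hcard : (#{x ∈ s | p x ∈ Z} : ℝ) ≤ #Z * d := by
    exact_mod_cast card_filter_mem_le_card_mul s p Z hd
  calc ∑ x ∈ s with p x ∈ Z, g x ≤ #{x ∈ s | p x ∈ Z} * supOrZero {x ∈ s | p x ∈ Z} g :=
        sum_le_card_mul_supOrZero
    _ ≤ #Z * d * supOrZero {x ∈ s | p x ∈ Z} g :=
        mul_le_mul_of_nonneg_right hcard
          (supOrZero_nonneg fun x hx => hg x (mem_filter.1 hx).1)

theorem sum_le_sum_add_sum_of_subset_union {α M : Type*} [DecidableEq α] [AddCommMonoid M]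
    [PartialOrder M] [IsOrderedAddMonoid M] {s t u : Finset α} {g : α → M}
    (hs : s ⊆ t ∪ u) (hg : ∀ x ∈ t ∪ u, 0 ≤ g x) :
    ∑ x ∈ s, g x ≤ ∑ x ∈ t, g x + ∑ x ∈ u, g x := by
  rw [← sum_union_inter]
  exact le_add_of_le_of_nonneg (sum_le_sum_of_subset_of_nonneg hs fun x hx _ => hg x hx)
    (sum_nonneg fun x hx => hg x (mem_union_left _ (mem_inter.1 hx).1))

section Submodular

variable {α : Type*} [DecidableEq α] {E : Finset α} {h : Finset α → ℝ}

theorem insert_sub_le_singleton (h0 : h ∅ = 0) (hnn : ∀ S ⊆ E, 0 ≤ h S)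
    (hsubmod : ∀ A B : Finset α, A ⊆ B → B ⊆ E → ∀ e ∈ E, e ∉ B →
      h (insert e B) - h B ≤ h (insert e A) - h A)
    {S : Finset α} (hS : S ⊆ E) {e : α} (he : e ∈ E) :
    h (insert e S) - h S ≤ h {e} := by
  by_cases heS : e ∈ S
  · rw [insert_eq_of_mem heS, sub_self]
    exact hnn {e} (singleton_subset_iff.2 he)
  · simpa [h0] using hsubmod ∅ S (empty_subset S) hS e he heS

theorem union_sub_le_sum_singleton (h0 : h ∅ = 0) (hnn : ∀ S ⊆ E, 0 ≤ h S)
    (hsubmod : ∀ A B : Finset α, A ⊆ B → B ⊆ E → ∀ e ∈ E, e ∉ B →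
      h (insert e B) - h B ≤ h (insert e A) - h A)
    {A D : Finset α} (hA : A ⊆ E) (hD : D ⊆ E) :
    h (A ∪ D) - h A ≤ ∑ e ∈ D, h {e} := by
  induction D using Finset.induction_on with
  | empty => simp
  | insert e D heD ih =>
    have hD' : D ⊆ E := (subset_insert e D).trans hD
    have hstep := insert_sub_le_singleton h0 hnn hsubmod (union_subset hA hD')
      (hD (mem_insert_self e D))
    rw [union_insert, sum_insert heD]
    linarith [ih hD']

end Submodular

theorem pair_sublist_iff_exists_get {α : Type*} {l : List α} {u v : α} :
    [u, v].Sublist l ↔ ∃ i j : Fin l.length, i < j ∧ l.get i = u ∧ l.get j = v := by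
  constructor
  · intro huv
    obtain ⟨f, hf⟩ := List.sublist_iff_exists_fin_orderEmbedding_get_eq.1 huv
    exact ⟨f 0, f 1, f.lt_iff_lt.2 Fin.zero_lt_one, (hf 0).symm, (hf 1).symm⟩
  · rintro ⟨i, j, hij, rfl, rfl⟩
    have hi : l.get i ∈ l.take j := List.mem_take_iff_getElem.2 ⟨i, by omega, rfl⟩
    have hj : l.get j ∈ l.drop j := List.mem_drop_iff_getElem.2 ⟨0, by omega, by simp⟩
    have := (List.sublist_append_iff (r₁ := l.take j) (r₂ := l.drop j)).2
      ⟨[l.get i], [l.get j], rfl, List.singleton_sublist.2 hi, List.singleton_sublist.2 hj⟩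
    rwa [List.take_append_drop] at this

section InducedEdges

variable {V : Type*} [DecidableEq V] {E : Finset (V × V)}

theorem mem_inducedEdges {σ : List V} {e : V × V} :
    e ∈ inducedEdges E σ ↔ e ∈ E ∧ ([e.1, e.2].Sublist σ ∨ e.1 = e.2 ∧ e.1 ∈ σ) := by
  rw [inducedEdges, mem_filter, pair_sublist_iff_exists_get]

theorem inducedEdges_mono {l₁ l₂ : List V} (hl : l₁.Sublist l₂) :
    inducedEdges E l₁ ⊆ inducedEdges E l₂ := by
  intro e
  simp only [mem_inducedEdges]
  exact And.imp_right (Or.imp (·.trans hl) (And.imp_right (hl.subset ·)))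

theorem mem_inducedEdges_filter {σ : List V} {e : V × V} (p : V → Bool)
    (he : e ∈ inducedEdges E σ) (h1 : p e.1) (h2 : p e.2) :
    e ∈ inducedEdges E (σ.filter p) := by
  rw [mem_inducedEdges] at he ⊢
  refine he.imp_right (Or.imp (fun hs => ?_) (And.imp_right fun hm => List.mem_filter.2 ⟨hm, h1⟩))
  simpa [h1, h2] using hs.filter p

theorem inducedEdges_sdiff_filter_subset (σ : List V) (Z : Finset V) :
    inducedEdges E σ \ inducedEdges E (σ.filter fun v => v ∉ Z) ⊆
      {e ∈ E | e.2 ∈ Z} ∪ {e ∈ E | e.1 ∈ Z} := by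
  intro e he
  obtain ⟨heσ, heZ⟩ := mem_sdiff.1 he
  have heE : e ∈ E := (mem_filter.1 heσ).1
  by_contra hcon
  simp only [mem_union, mem_filter, heE, true_and, not_or] at hcon
  exact heZ (mem_inducedEdges_filter _ heσ (by simpa using hcon.2) (by simpa using hcon.1))

end InducedEdges

theorem card_filter_snd_eq_le_dIn (E : Finset (V × V)) (v : V) : #{e ∈ E | e.2 = v} ≤ dIn E :=
  le_sup (f := fun v => #{e ∈ E | e.2 = v}) (mem_univ v)

theorem card_filter_fst_eq_le_dOut (E : Finset (V × V)) (v : V) :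
    #{e ∈ E | e.1 = v} ≤ dOut E :=
  le_sup (f := fun v => #{e ∈ E | e.1 = v}) (mem_univ v)

theorem multi_removal_loss_bound_general
    (E : Finset (V × V)) (h : Finset (V × V) → ℝ)
    (h0 : h ∅ = 0) (hnn : ∀ S ⊆ E, 0 ≤ h S)
    (hsubmod : ∀ A B : Finset (V × V), A ⊆ B → B ⊆ E → ∀ e ∈ E, e ∉ B →
      h (insert e B) - h B ≤ h (insert e A) - h A)
    (σ : List V)
    (Z : Finset V) (t : ℕ) (ht : t = Z.card) :
    fval E h σ - fval E h (σ.filter fun v => v ∉ Z) ≤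
        (t : ℝ) * ((dIn E : ℝ) * maxInUtilitySet E h Z +
          (dOut E : ℝ) * maxOutUtilitySet E h Z) ∧
      (t : ℝ) * ((dIn E : ℝ) * maxInUtilitySet E h Z +
          (dOut E : ℝ) * maxOutUtilitySet E h Z) ≤
        (t : ℝ) * ((dIn E : ℝ) + (dOut E : ℝ)) *
          max (maxInUtilitySet E h Z) (maxOutUtilitySet E h Z) := by
  set A := inducedEdges E (σ.filter fun v => v ∉ Z)
  set B := inducedEdges E σ
  have hAB : A ⊆ B := inducedEdges_mono List.filter_sublist
  have hBE : B ⊆ E := filter_subset _ _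
  have hsingle : ∀ e ∈ E, 0 ≤ h {e} := fun e he => hnn {e} (singleton_subset_iff.2 he)
  subst ht
  constructor
  · calc fval E h σ - fval E h (σ.filter fun v => v ∉ Z) = h (A ∪ B \ A) - h A := by
          rw [union_sdiff_of_subset hAB]; rfl
      _ ≤ ∑ e ∈ B \ A, h {e} :=
          union_sub_le_sum_singleton h0 hnn hsubmod (hAB.trans hBE) (sdiff_subset.trans hBE)
      _ ≤ ∑ e ∈ E with e.2 ∈ Z, h {e} + ∑ e ∈ E with e.1 ∈ Z, h {e} :=
          sum_le_sum_add_sum_of_subset_union (inducedEdges_sdiff_filter_subset σ Z)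
            fun e he => hsingle e (by simp only [mem_union, mem_filter] at he; tauto)
      _ ≤ #Z * dIn E * maxInUtilitySet E h Z + #Z * dOut E * maxOutUtilitySet E h Z :=
          add_le_add (sum_filter_mem_le E Prod.snd Z (card_filter_snd_eq_le_dIn E) hsingle)
            (sum_filter_mem_le E Prod.fst Z (card_filter_fst_eq_le_dOut E) hsingle)
      _ = _ := by ring
  · have hIn := le_max_left (maxInUtilitySet E h Z) (maxOutUtilitySet E h Z)
    have hOut := le_max_right (maxInUtilitySet E h Z) (maxOutUtilitySet E h Z)
    calc (#Z : ℝ) * (dIn E * maxInUtilitySet E h Z + dOut E * maxOutUtilitySet E h Z)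
        ≤ #Z * (dIn E * max (maxInUtilitySet E h Z) (maxOutUtilitySet E h Z) +
            dOut E * max (maxInUtilitySet E h Z) (maxOutUtilitySet E h Z)) := by gcongr
      _ = _ := by ring

/-- The removal-loss bound from Case 2.2 of the proof of Theorem 2: removing a set `Z`
of `t ≥ 1` elements of `σ` loses at most `t·(d_in·M_in + d_out·M_out)`, which is at
most `t·(d_in + d_out)·max{M_in, M_out}`. -/
theorem multi_removal_loss_bound
    (E : Finset (V × V)) (h : Finset (V × V) → ℝ)
    (h0 : h ∅ = 0) (hnn : ∀ S ⊆ E, 0 ≤ h S)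
    (hmono : ∀ A B : Finset (V × V), A ⊆ B → B ⊆ E → h A ≤ h B)
    (hsubmod : ∀ A B : Finset (V × V), A ⊆ B → B ⊆ E → ∀ e ∈ E, e ∉ B →
      h (insert e B) - h B ≤ h (insert e A) - h A)
    (σ : List V) (hnodup : σ.Nodup)
    (Z : Finset V) (hZσ : Z ⊆ σ.toFinset) (t : ℕ) (ht : t = Z.card) (ht1 : 1 ≤ t) :
    fval E h σ - fval E h (σ.filter fun v => v ∉ Z) ≤
        (t : ℝ) * ((dIn E : ℝ) * maxInUtilitySet E h Z +
          (dOut E : ℝ) * maxOutUtilitySet E h Z) ∧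
      (t : ℝ) * ((dIn E : ℝ) * maxInUtilitySet E h Z +
          (dOut E : ℝ) * maxOutUtilitySet E h Z) ≤
        (t : ℝ) * ((dIn E : ℝ) + (dOut E : ℝ)) *
          max (maxInUtilitySet E h Z) (maxOutUtilitySet E h Z) :=
  multi_removal_loss_bound_general E h h0 hnn hsubmod σ Z t ht

end RoseNets
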